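/- arXiv:alg-geom/9610005 — 4 statements merged into one kernel-verified Lean document; each statement's English description precedes it below -/
import Mathlib

section
/- Let ζ : 𝒬₀ → ℝ, let f ∈ F_ζ, let S = supp(f) and x = π(f). Then the tangent cone of the polyhedron π(F_ζ) at x equals π(F₀(S̄)): ℝ₊(π(F_ζ) − x) = π(F₀(S̄)). In particular the tangent cone of π(F_ζ) at the minimal face containing x is independent of ζ, depending only on the closure of S. -/
/-!
Common framework: finite quivers, flows, boundaries, cycles, closures, the projection π,
and the solution polyhedra of the (generalised) transportation problem, following
Sardo Infirri, "Orbifold Singularities and McKay Flows".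
-/

open Finset

/-- A (finite) quiver given by tail and head maps on a type of arrows. -/
structure FQuiver (V A : Type) where
  t : A → V
  h : A → V

namespace FQuiver

variable {V A : Type}

/-- The boundary (net contribution) of a flow `f : A → R` at each vertex. -/
def boundary [Fintype A] [DecidableEq V] (Q : FQuiver V A) {R : Type} [AddCommGroup R]
    (f : A → R) : V → R := fun v =>
  (∑ a ∈ univ.filter (fun a => Q.h a = v), f a) -
  (∑ a ∈ univ.filter (fun a => Q.t a = v), f a)

/-- Source of a step (an arrow together with a direction of traversal). -/
def stepSrc (Q : FQuiver V A) (s : A × Bool) : V := if s.2 then Q.t s.1 else Q.h s.1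

/-- Destination of a step. -/
def stepDst (Q : FQuiver V A) (s : A × Bool) : V := if s.2 then Q.h s.1 else Q.t s.1

/-- A walk (path) from `v` to `v'` in the underlying undirected graph of the quiver:
a nonempty list of steps which compose, with consecutive arrows distinct. -/
def IsWalk (Q : FQuiver V A) (p : List (A × Bool)) (v v' : V) : Prop :=
  p ≠ [] ∧
  p.head?.map Q.stepSrc = some v ∧
  p.getLast?.map Q.stepDst = some v' ∧
  List.Chain' (fun s s' => Q.stepDst s = Q.stepSrc s') p ∧
  List.Chain' (fun s s' : A × Bool => s.1 ≠ s'.1) p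

/-- A cycle: a closed walk. -/
def IsCycle (Q : FQuiver V A) (p : List (A × Bool)) : Prop := ∃ v, Q.IsWalk p v v

end FQuiver

variable {V A : Type}

/-- The positive part of a walk/cycle: the arrows traversed in agreement with it. -/
def posArrows (p : List (A × Bool)) : Set A := {a | (a, true) ∈ p}

/-- The negative part of a walk/cycle: the arrows traversed against it. -/
def negArrows (p : List (A × Bool)) : Set A := {a | (a, false) ∈ p}

/-- The (integral) basic flow associated to a walk/cycle. -/
def basicFlowZ [DecidableEq A] (p : List (A × Bool)) : A → ℤ := fun a =>
  (p.count (a, true) : ℤ) - (p.count (a, false) : ℤ)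

/-- The basic flow associated to a walk/cycle, as a real flow. -/
def basicFlow [DecidableEq A] (p : List (A × Bool)) : A → ℝ := fun a =>
  (basicFlowZ p a : ℝ)

/-- The linear map induced by a typing map `π : A → Fin n` on flows. -/
def piMap [Fintype A] {n : ℕ} (π : A → Fin n) {R : Type} [AddCommMonoid R] (f : A → R) :
    Fin n → R := fun i => ∑ a ∈ univ.filter (fun a => π a = i), f a

/-- The support of a flow. -/
def fsupport (f : A → ℝ) : Set A := {a | f a ≠ 0}

/-- The polyhedron `F_ζ` of admissible (nonnegative) `ζ`-flows. -/
def Fpoly [Fintype A] [DecidableEq V] (Q : FQuiver V A) (ζ : V → ℝ) : Set (A → ℝ) :=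
  {f | (∀ a, 0 ≤ f a) ∧ Q.boundary f = ζ}

/-- A set of arrows contains a cycle. -/
def ContainsCycle (Q : FQuiver V A) (S : Set A) : Prop :=
  ∃ p : List (A × Bool), Q.IsCycle p ∧ ∀ s ∈ p, s.1 ∈ S

/-- A set of arrows is closed if, for every cycle of type zero, it contains the positive
part iff it contains the negative part. -/
def IsClosedConfig [Fintype A] [DecidableEq A] {n : ℕ} (Q : FQuiver V A) (π : A → Fin n)
    (T : Set A) : Prop :=
  ∀ p : List (A × Bool), Q.IsCycle p → piMap π (basicFlowZ p) = 0 →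
    (posArrows p ⊆ T ↔ negArrows p ⊆ T)

/-- The closure `S̄` of a configuration: the smallest closed over-set. -/
def confClosure [Fintype A] [DecidableEq A] {n : ℕ} (Q : FQuiver V A) (π : A → Fin n)
    (S : Set A) : Set A :=
  ⋂₀ {T | S ⊆ T ∧ IsClosedConfig Q π T}

/-- `Z₀(S)`: the space of flows with zero boundary vanishing outside `S`. -/
def Z0 [Fintype A] [DecidableEq V] (Q : FQuiver V A) (S : Set A) : Set (A → ℝ) :=
  {g | Q.boundary g = 0 ∧ ∀ a ∉ S, g a = 0}

/-- `F₀(S)`: the cone of flows with zero boundary which are nonnegative outside `S`. -/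
def F0cone [Fintype A] [DecidableEq V] (Q : FQuiver V A) (S : Set A) : Set (A → ℝ) :=
  {g | Q.boundary g = 0 ∧ ∀ a ∉ S, 0 ≤ g a}

/-- The rank of a configuration: the dimension of `span(π(Z₀(S̄)))`. -/
noncomputable def confRank [Fintype A] [DecidableEq A] [DecidableEq V] {n : ℕ} (Q : FQuiver V A)
    (π : A → Fin n) (S : Set A) : ℕ :=
  Module.finrank ℝ
    (Submodule.span ℝ ((fun g : A → ℝ => piMap π g) '' Z0 Q (confClosure Q π S)))

/-- The projected polyhedron `π(F_ζ) ⊆ ℝⁿ`. -/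
def piImg [Fintype A] [DecidableEq V] {n : ℕ} (Q : FQuiver V A) (π : A → Fin n) (ζ : V → ℝ) :
    Set (Fin n → ℝ) := (fun g : A → ℝ => piMap π g) '' Fpoly Q ζ

/-- The tangent cone `ℝ₊(P − x)` of a convex set at a point. -/
def polyTangentCone {E : Type} [AddCommGroup E] [Module ℝ E] (P : Set E) (x : E) : Set E :=
  {y | ∃ t : ℝ, 0 ≤ t ∧ ∃ p ∈ P, y = t • (p - x)}

/-- A face of a convex set: a convex extreme subset. -/
def IsFace {E : Type} [AddCommGroup E] [Module ℝ E] (P F : Set E) : Prop :=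
  Convex ℝ F ∧ IsExtreme ℝ P F

/-- `Face_ζ(S)` computed from a flow `f`: `π(F_ζ) ∩ (π(f) + span(π(Z₀(S̄))))`. -/
def faceOf [Fintype A] [DecidableEq A] [DecidableEq V] {n : ℕ} (Q : FQuiver V A)
    (π : A → Fin n) (ζ : V → ℝ) (S : Set A) (f : A → ℝ) : Set (Fin n → ℝ) :=
  piImg Q π ζ ∩
    {y | y - piMap π f ∈
      Submodule.span ℝ ((fun g : A → ℝ => piMap π g) '' Z0 Q (confClosure Q π S))}

/-- The McKay quiver of the cyclic action `1/r (w₁, …, w_n)`: vertices `ℤ/rℤ` and one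
arrow `a_v^i : v → v − w_i` for each vertex `v` and each `i`. -/
def mckayQuiver (r n : ℕ) (w : Fin n → ZMod r) : FQuiver (ZMod r) (ZMod r × Fin n) where
  t := fun a => a.1
  h := fun a => a.1 - w a.2

/-- The commutation flow `χ_v^i + χ_{v−w_i}^j − χ_v^j − χ_{v−w_j}^i`. -/
def commFlow (r n : ℕ) (w : Fin n → ZMod r) (v : ZMod r) (i j : Fin n) :
    ZMod r × Fin n → ℤ := fun a =>
  (if a = (v, i) then 1 else 0) + (if a = (v - w i, j) then 1 else 0)
    - (if a = (v, j) then 1 else 0) - (if a = (v - w j, i) then 1 else 0)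

/-- `Λ²`: the subgroup of integral flows generated by the commutation flows. -/
def mckayLambda2 (r n : ℕ) (w : Fin n → ZMod r) : AddSubgroup (ZMod r × Fin n → ℤ) :=
  AddSubgroup.closure {g | ∃ v i j, g = commFlow r n w v i j}

/-!
The tangent cone of `F_ζ` at `f` is `F₀(supp f)`, and taking tangent cones commutes with the
linear map `π`; so it suffices to show `π(F₀(S̄)) = π(F₀(S))` for `S = supp f`.
Let `K` be the cone of flows with zero boundary and zero type that are nonnegative off `S`, and
`T = S ∪ {a | h a > 0 for some h ∈ K}`. Given `u` with zero boundary and zero type which is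
negative only on arrows of `T`, adding to `u` a large element of `K` yields an element of `K`
positive wherever `u` is; so `T` is closed (apply this to `±` the basic flow of a type-zero
cycle) and contains `S̄`. Finally, adding to `g ∈ F₀(S̄)` a large element of `K` gives a flow in
`F₀(S)` with the same image under `π`.
-/

open Filter Topology

namespace FQuiver

variable [Fintype A] [DecidableEq V] (Q : FQuiver V A)

def boundaryₗ : (A → ℝ) →ₗ[ℝ] V → ℝ where
  toFun := Q.boundary
  map_add' f g := by
    funext v
    simp only [boundary, Pi.add_apply, sum_add_distrib]
    ring
  map_smul' c f := by
    funext v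
    simp only [boundary, Pi.smul_apply, smul_eq_mul, ← mul_sum, mul_sub, RingHom.id_apply]

@[simp] lemma boundary_zero : Q.boundary (0 : A → ℝ) = 0 := map_zero Q.boundaryₗ

@[simp] lemma boundary_add (f g : A → ℝ) : Q.boundary (f + g) = Q.boundary f + Q.boundary g :=
  map_add Q.boundaryₗ f g

@[simp] lemma boundary_sub (f g : A → ℝ) : Q.boundary (f - g) = Q.boundary f - Q.boundary g :=
  map_sub Q.boundaryₗ f g

@[simp] lemma boundary_neg (f : A → ℝ) : Q.boundary (-f) = -Q.boundary f :=
  map_neg Q.boundaryₗ f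

@[simp] lemma boundary_smul (c : ℝ) (f : A → ℝ) : Q.boundary (c • f) = c • Q.boundary f :=
  map_smul Q.boundaryₗ c f

lemma boundary_single [DecidableEq A] (a : A) :
    Q.boundary (Pi.single a (1 : ℝ)) = Pi.single (Q.h a) 1 - Pi.single (Q.t a) 1 := by
  funext v
  simp [boundary, Pi.single_apply, eq_comm]

end FQuiver

section piMap

variable [Fintype A] {n : ℕ} (π : A → Fin n)

def piMapₗ : (A → ℝ) →ₗ[ℝ] Fin n → ℝ where
  toFun := piMap π
  map_add' f g := by
    funext i
    simp only [piMap, Pi.add_apply, sum_add_distrib]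
  map_smul' c f := by
    funext i
    simp only [piMap, Pi.smul_apply, smul_eq_mul, ← mul_sum, RingHom.id_apply]

@[simp] lemma piMapₗ_apply (f : A → ℝ) : piMapₗ π f = piMap π f := rfl

@[simp] lemma piMap_add (f g : A → ℝ) : piMap π (f + g) = piMap π f + piMap π g :=
  map_add (piMapₗ π) f g

@[simp] lemma piMap_smul (c : ℝ) (f : A → ℝ) : piMap π (c • f) = c • piMap π f :=
  map_smul (piMapₗ π) c f

@[simp] lemma piMap_neg (f : A → ℝ) : piMap π (-f) = -piMap π f :=
  map_neg (piMapₗ π) f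

lemma piMap_intCast (g : A → ℤ) :
    piMap π (fun a => (g a : ℝ)) = fun i => ((piMap π g i : ℤ) : ℝ) := by
  funext i
  simp [piMap]

end piMap

lemma polyTangentCone_image {E F : Type} [AddCommGroup E] [Module ℝ E] [AddCommGroup F]
    [Module ℝ F] (L : E →ₗ[ℝ] F) (P : Set E) (x : E) :
    polyTangentCone (L '' P) (L x) = L '' polyTangentCone P x := by
  ext y
  constructor
  · rintro ⟨t, ht, _, ⟨p, hp, rfl⟩, rfl⟩
    exact ⟨t • (p - x), ⟨t, ht, p, hp, rfl⟩, by rw [map_smul, map_sub]⟩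
  · rintro ⟨_, ⟨t, ht, p, hp, rfl⟩, rfl⟩
    exact ⟨t, ht, L p, ⟨p, hp, rfl⟩, by rw [map_smul, map_sub]⟩

lemma exists_pos_add_smul_nonneg {ι : Type} [Finite ι] {f g : ι → ℝ} (hf : ∀ a, 0 ≤ f a)
    (hg : ∀ a, f a = 0 → 0 ≤ g a) : ∃ ε > 0, ∀ a, 0 ≤ f a + ε * g a := by
  have hev : ∀ a, ∀ᶠ ε in 𝓝[>] (0 : ℝ), 0 ≤ f a + ε * g a := by
    intro a
    rcases (hf a).eq_or_lt with hfa | hfa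
    · filter_upwards [self_mem_nhdsWithin] with ε hε
      rw [← hfa, zero_add]
      exact mul_nonneg hε.le (hg a hfa.symm)
    · have hlim : Tendsto (fun ε : ℝ => f a + ε * g a) (𝓝[>] 0) (𝓝 (f a)) := by
        have : Tendsto (fun ε : ℝ => f a + ε * g a) (𝓝 0) (𝓝 (f a + 0 * g a)) :=
          (continuous_const.add (continuous_id.mul continuous_const)).tendsto 0
        simpa using this.mono_left nhdsWithin_le_nhds
      exact (hlim.eventually (lt_mem_nhds hfa)).mono fun _ => le_of_lt
  obtain ⟨ε, hε, hpos⟩ := ((eventually_all.2 hev).and self_mem_nhdsWithin).exists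
  exact ⟨ε, hpos, hε⟩

/-- Each negative value of `u` on `s` is compensated by a rescaled witness; the sum of the
witnesses compensates all of them at once, since every element of `K` is nonnegative on `s`. -/
lemma PointedCone.exists_mem_forall_add_nonneg {ι : Type} [Fintype ι] (K : PointedCone ℝ (ι → ℝ))
    {s : Set ι} (hK : ∀ h ∈ K, ∀ a ∈ s, 0 ≤ h a) (u : ι → ℝ)
    (hu : ∀ a ∈ s, u a < 0 → ∃ h ∈ K, 0 < h a) : ∃ h ∈ K, ∀ a ∈ s, 0 ≤ u a + h a := by
  have hpoint : ∀ a, ∃ h ∈ K, a ∈ s → 0 ≤ u a + h a := by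
    intro a
    by_cases hua : a ∈ s ∧ u a < 0
    · obtain ⟨h, hK, hha⟩ := hu a hua.1 hua.2
      refine ⟨(-u a / h a) • h, K.smul_mem (div_nonneg (by linarith) hha.le) hK, fun _ => ?_⟩
      rw [Pi.smul_apply, smul_eq_mul, div_mul_cancel₀ _ hha.ne']
      simp
    · exact ⟨0, K.zero_mem, fun ha => by simpa using not_lt.1 fun h => hua ⟨ha, h⟩⟩
  choose h hK' hh using hpoint
  refine ⟨∑ b, h b, Submodule.sum_mem K fun b _ => hK' b, fun a ha => ?_⟩
  calc 0 ≤ u a + h a a := hh a ha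
    _ ≤ u a + ∑ b, h b a := by
      gcongr
      exact single_le_sum (fun b _ => hK (h b) (hK' b) a ha) (mem_univ a)
    _ = u a + (∑ b, h b) a := by rw [Finset.sum_apply]

section basicFlow

variable [DecidableEq A]

def stepFlow (s : A × Bool) : A → ℝ := if s.2 then Pi.single s.1 1 else -Pi.single s.1 1

@[simp] lemma basicFlow_nil : basicFlow ([] : List (A × Bool)) = 0 := by
  funext a
  simp [basicFlow, basicFlowZ]

lemma basicFlow_cons (s : A × Bool) (p : List (A × Bool)) :
    basicFlow (s :: p) = stepFlow s + basicFlow p := by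
  funext a
  obtain ⟨b, _ | _⟩ := s <;> obtain rfl | hab := eq_or_ne b a
  all_goals simp [basicFlow, basicFlowZ, stepFlow, *]
  all_goals ring

lemma basicFlow_apply (p : List (A × Bool)) (a : A) :
    basicFlow p a = (p.count (a, true) : ℝ) - p.count (a, false) := by
  simp [basicFlow, basicFlowZ]

variable [Fintype A] [DecidableEq V] (Q : FQuiver V A)

lemma FQuiver.boundary_stepFlow (s : A × Bool) :
    Q.boundary (stepFlow s) = Pi.single (Q.stepDst s) 1 - Pi.single (Q.stepSrc s) 1 := by
  rcases s with ⟨a, _ | _⟩ <;> simp [stepFlow, boundary_single, stepDst, stepSrc]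

lemma FQuiver.boundary_basicFlow_of_isChain (s : A × Bool) (p : List (A × Bool))
    (hp : (s :: p).IsChain fun s s' => Q.stepDst s = Q.stepSrc s') :
    Q.boundary (basicFlow (s :: p)) =
      Pi.single (Q.stepDst ((s :: p).getLast (List.cons_ne_nil s p))) 1 -
        Pi.single (Q.stepSrc s) 1 := by
  induction p generalizing s with
  | nil => simp [basicFlow_cons, boundary_stepFlow]
  | cons s' p ih =>
    obtain ⟨hss', hp⟩ := List.isChain_cons_cons.mp hp
    rw [basicFlow_cons, boundary_add, ih s' hp, boundary_stepFlow, hss', List.getLast_cons_cons]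
    abel

lemma FQuiver.boundary_basicFlow_of_isWalk {p : List (A × Bool)} {v v' : V}
    (hp : Q.IsWalk p v v') : Q.boundary (basicFlow p) = Pi.single v' 1 - Pi.single v 1 := by
  obtain ⟨hne, hhead, hlast, hchain, -⟩ := hp
  cases p with
  | nil => exact absurd rfl hne
  | cons s p =>
    rw [List.getLast?_eq_some_getLast (List.cons_ne_nil s p)] at hlast
    simp only [List.head?_cons, Option.map_some, Option.some.injEq] at hhead hlast
    rw [Q.boundary_basicFlow_of_isChain s p hchain, hhead, hlast]

lemma FQuiver.boundary_basicFlow_of_isCycle {p : List (A × Bool)} (hp : Q.IsCycle p) :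
    Q.boundary (basicFlow p) = 0 := by
  obtain ⟨v, hv⟩ := hp
  rw [Q.boundary_basicFlow_of_isWalk hv, sub_self]

end basicFlow

lemma FQuiver.subset_confClosure [Fintype A] [DecidableEq A] {n : ℕ} (Q : FQuiver V A)
    (π : A → Fin n) (S : Set A) : S ⊆ confClosure Q π S :=
  Set.subset_sInter fun _ hT => hT.1

namespace FQuiver

variable [Fintype A] [DecidableEq V] (Q : FQuiver V A)

lemma polyTangentCone_Fpoly {ζ : V → ℝ} {f : A → ℝ} (hf : f ∈ Fpoly Q ζ) :
    polyTangentCone (Fpoly Q ζ) f = F0cone Q (fsupport f) := by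
  obtain ⟨hf_nonneg, hf_bd⟩ := hf
  ext g
  constructor
  · rintro ⟨t, ht, p, ⟨hp_nonneg, hp_bd⟩, rfl⟩
    refine ⟨by simp [hp_bd, hf_bd], fun a ha => ?_⟩
    replace ha : f a = 0 := by simpa [fsupport] using ha
    simpa [ha] using mul_nonneg ht (hp_nonneg a)
  · rintro ⟨hg_bd, hg_nonneg⟩
    obtain ⟨ε, hε, hfg⟩ :=
      exists_pos_add_smul_nonneg hf_nonneg fun a ha => hg_nonneg a (by simpa [fsupport])
    refine ⟨ε⁻¹, inv_nonneg.2 hε.le, f + ε • g, ⟨hfg, by simp [hf_bd, hg_bd]⟩, ?_⟩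
    rw [add_sub_cancel_left, smul_smul, inv_mul_cancel₀ hε.ne', one_smul]

variable {n : ℕ} (π : A → Fin n)

def balancedCone (S : Set A) : PointedCone ℝ (A → ℝ) where
  carrier := {h | Q.boundary h = 0 ∧ piMap π h = 0 ∧ ∀ a ∉ S, 0 ≤ h a}
  add_mem' := by
    rintro g h ⟨hg_bd, hg_pi, hg_nonneg⟩ ⟨hh_bd, hh_pi, hh_nonneg⟩
    exact ⟨by simp [hg_bd, hh_bd], by simp [hg_pi, hh_pi],
      fun a ha => add_nonneg (hg_nonneg a ha) (hh_nonneg a ha)⟩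
  zero_mem' := ⟨Q.boundary_zero, (piMapₗ π).map_zero, fun _ _ => le_rfl⟩
  smul_mem' := by
    rintro ⟨c, hc⟩ h ⟨hh_bd, hh_pi, hh_nonneg⟩
    exact ⟨by simp [Nonneg.mk_smul, hh_bd], by simp [Nonneg.mk_smul, hh_pi],
      fun a ha => mul_nonneg hc (hh_nonneg a ha)⟩

def balancedSupport (S : Set A) : Set A :=
  S ∪ {a | ∃ h ∈ Q.balancedCone π S, 0 < h a}

variable {π} {S : Set A}

lemma exists_mem_balancedCone_forall_add_nonneg (u : A → ℝ)
    (hu : ∀ a ∉ S, u a < 0 → a ∈ Q.balancedSupport π S) :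
    ∃ h ∈ Q.balancedCone π S, ∀ a ∉ S, 0 ≤ u a + h a :=
  (Q.balancedCone π S).exists_mem_forall_add_nonneg (s := Sᶜ) (fun _ hh => hh.2.2) u
    fun a ha hua => (hu a ha hua).resolve_left ha

lemma mem_balancedSupport_of_pos {u : A → ℝ} (hu_bd : Q.boundary u = 0) (hu_pi : piMap π u = 0)
    (hu : ∀ a ∉ S, u a < 0 → a ∈ Q.balancedSupport π S) {b : A} (hb : 0 < u b) :
    b ∈ Q.balancedSupport π S := by
  by_cases hbS : b ∈ S
  · exact Or.inl hbS
  obtain ⟨h, ⟨hh_bd, hh_pi, hh_nonneg⟩, huh⟩ := Q.exists_mem_balancedCone_forall_add_nonneg u hu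
  exact Or.inr ⟨u + h, ⟨by simp [hu_bd, hh_bd], by simp [hu_pi, hh_pi], huh⟩,
    by simpa using add_pos_of_pos_of_nonneg hb (hh_nonneg b hbS)⟩

lemma subset_balancedSupport_of_sign {u : A → ℝ} (hu_bd : Q.boundary u = 0)
    (hu_pi : piMap π u = 0) {P N : Set A} (hP : P ⊆ Q.balancedSupport π S)
    (hu_neg : ∀ a, u a < 0 → a ∈ P) (hN : ∀ a ∈ N, u a ≤ 0 → a ∈ P) :
    N ⊆ Q.balancedSupport π S := fun b hb =>
  (le_or_gt (u b) 0).elim (fun hub => hP (hN b hb hub))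
    (Q.mem_balancedSupport_of_pos hu_bd hu_pi fun a _ hua => hP (hu_neg a hua))

variable [DecidableEq A]

lemma isClosedConfig_balancedSupport : IsClosedConfig Q π (Q.balancedSupport π S) := by
  intro p hp htype
  have h_bd := Q.boundary_basicFlow_of_isCycle hp
  have h_pi : piMap π (basicFlow p) = 0 := by
    change piMap π (fun a => (basicFlowZ p a : ℝ)) = 0
    rw [piMap_intCast, htype]
    funext i
    simp
  have h_count (a : A) (b : Bool) : (a, b) ∈ p ↔ (0 : ℝ) < p.count (a, b) :=
    List.count_pos_iff.symm.trans Nat.cast_pos.symm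
  have h_count_nonneg (a : A) (b : Bool) : (0 : ℝ) ≤ p.count (a, b) := Nat.cast_nonneg _
  constructor
  · intro hP
    refine Q.subset_balancedSupport_of_sign (u := -basicFlow p) (by simp [h_bd]) (by simp [h_pi])
      hP (fun a ha => ?_) (fun a ha hua => ?_)
    · rw [Pi.neg_apply, basicFlow_apply] at ha
      exact (h_count a true).2 (by linarith [h_count_nonneg a false])
    · rw [Pi.neg_apply, basicFlow_apply] at hua
      exact (h_count a true).2 (by linarith [(h_count a false).1 ha])
  · intro hN
    refine Q.subset_balancedSupport_of_sign h_bd h_pi hN (fun a ha => ?_) (fun a ha hua => ?_)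
    · rw [basicFlow_apply] at ha
      exact (h_count a false).2 (by linarith [h_count_nonneg a true])
    · rw [basicFlow_apply] at hua
      exact (h_count a false).2 (by linarith [(h_count a true).1 ha])

lemma confClosure_subset_balancedSupport : confClosure Q π S ⊆ Q.balancedSupport π S :=
  Set.sInter_subset_of_mem ⟨Set.subset_union_left, Q.isClosedConfig_balancedSupport⟩

theorem piMap_image_F0cone_confClosure :
    piMapₗ π '' F0cone Q (confClosure Q π S) = piMapₗ π '' F0cone Q S := by
  refine subset_antisymm ?_ (Set.image_mono fun g ⟨hg_bd, hg_nonneg⟩ =>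
    ⟨hg_bd, fun a ha => hg_nonneg a fun haS => ha (Q.subset_confClosure π S haS)⟩)
  rintro _ ⟨g, ⟨hg_bd, hg_nonneg⟩, rfl⟩
  obtain ⟨h, ⟨hh_bd, hh_pi, -⟩, hgh⟩ := Q.exists_mem_balancedCone_forall_add_nonneg g
    fun a _ hga => Q.confClosure_subset_balancedSupport
      (by_contra fun ha => (hg_nonneg a ha).not_gt hga)
  exact ⟨g + h, ⟨by simp [hg_bd, hh_bd], hgh⟩, by simp [hh_pi]⟩

end FQuiver

theorem statement4_general {V A : Type} [Fintype A] [DecidableEq V] [DecidableEq A]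
    (Q : FQuiver V A) {n : ℕ} (π : A → Fin n) (ζ : V → ℝ)
    (f : A → ℝ) (hf : f ∈ Fpoly Q ζ) :
    polyTangentCone (piImg Q π ζ) (piMap π f) =
      (fun g : A → ℝ => piMap π g) '' F0cone Q (confClosure Q π (fsupport f)) := by
  calc polyTangentCone (piImg Q π ζ) (piMap π f)
      = piMapₗ π '' polyTangentCone (Fpoly Q ζ) f := polyTangentCone_image (piMapₗ π) _ f
    _ = piMapₗ π '' F0cone Q (fsupport f) := by rw [Q.polyTangentCone_Fpoly hf]
    _ = _ := (Q.piMap_image_F0cone_confClosure).symm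

/-- For `f ∈ F_ζ` with `S = supp(f)` and `x = π(f)`, the tangent cone
`ℝ₊(π(F_ζ) − x)` of the polyhedron `π(F_ζ)` at `x` equals `π(F₀(S̄))`. -/
theorem statement4 {V A : Type} [Fintype V] [Fintype A] [DecidableEq V] [DecidableEq A]
    (Q : FQuiver V A) {n : ℕ} (hn : 1 ≤ n) (π : A → Fin n) (ζ : V → ℝ)
    (f : A → ℝ) (hf : f ∈ Fpoly Q ζ) :
    polyTangentCone (piImg Q π ζ) (piMap π f) =
      (fun g : A → ℝ => piMap π g) '' F0cone Q (confClosure Q π (fsupport f)) :=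
  statement4_general Q π ζ f hf
end

section
/- Let f : 𝒬₁ → ℤ be an integral flow with ∂f = χ_{v'} − χ_v for two distinct vertices v, v' of 𝒬 (where χ_v denotes the indicator function of the vertex v). Then there exists a path p in 𝒬 from v to v' such that f(a) > 0 for every arrow a in the positive part p⁺ and f(a) < 0 for every arrow a in the negative part p⁻. -/
/-!
Common framework: finite quivers, flows, boundaries, cycles, closures, the projection π,
and the solution polyhedra of the (generalised) transportation problem, following
Sardo Infirri, "Orbifold Singularities and McKay Flows".
-/

open Finset

variable {V A : Type}

/-!
Let `S` be the set of vertices reachable from `v` by steps along which `f` is nonzero and points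
in the direction of travel. No arrow carries positive flow out of `S`, so the net inflow
`∑_{u ∈ S} ∂f(u)` is nonnegative. Since `∂f = χ_{v'} − χ_v` and `v ∈ S`, this forces `v' ∈ S`,
and the chain of steps reaching `v'` is the required path: consecutive steps cannot reuse an
arrow, because the sign of `f` fixes the direction in which an arrow is traversed.
-/

def FollowsFlow {R : Type} [Zero R] [Preorder R] (f : A → R) (s : A × Bool) : Prop :=
  if s.2 then 0 < f s.1 else f s.1 < 0

namespace FQuiver

variable (Q : FQuiver V A)

theorem sum_boundary [Fintype A] [DecidableEq V] {R : Type} [AddCommGroup R] (f : A → R)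
    (S : Finset V) :
    ∑ u ∈ S, Q.boundary f u =
      ∑ a ∈ univ.filter (fun a => Q.h a ∈ S), f a - ∑ a ∈ univ.filter (fun a => Q.t a ∈ S), f a := by
  simp only [boundary, sum_sub_distrib, sum_fiberwise_eq_sum_filter]

def FlowAdj {R : Type} [Zero R] [Preorder R] (f : A → R) (u u' : V) : Prop :=
  ∃ s, Q.stepSrc s = u ∧ Q.stepDst s = u' ∧ FollowsFlow f s

theorem sum_boundary_nonneg_of_flowAdj_closed [Fintype A] [DecidableEq V] {R : Type}
    [AddCommGroup R] [LinearOrder R] [IsOrderedAddMonoid R] (f : A → R) (S : Finset V)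
    (hS : ∀ u ∈ S, ∀ u', Q.FlowAdj f u u' → u' ∈ S) :
    0 ≤ ∑ u ∈ S, Q.boundary f u := by
  rw [sum_boundary, sum_filter, sum_filter, ← sum_sub_distrib]
  refine sum_nonneg fun a _ => ?_
  by_cases ht : Q.t a ∈ S <;> by_cases hh : Q.h a ∈ S <;> simp only [ht, hh, if_true, if_false,
    sub_self, sub_zero, zero_sub, le_refl, neg_nonneg]
  · exact not_lt.mp fun hpos => hh (hS _ ht _ ⟨(a, true), rfl, rfl, hpos⟩)
  · exact not_lt.mp fun hneg => ht (hS _ hh _ ⟨(a, false), rfl, rfl, hneg⟩)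

theorem isWalk_singleton (s : A × Bool) : Q.IsWalk [s] (Q.stepSrc s) (Q.stepDst s) :=
  ⟨List.cons_ne_nil _ _, rfl, rfl, .singleton s, .singleton s⟩

theorem IsWalk.cons {Q : FQuiver V A} {s s' : A × Bool} {p : List (A × Bool)} {u : V}
    (hp : Q.IsWalk (s' :: p) (Q.stepDst s) u) (hne : s.1 ≠ s'.1) :
    Q.IsWalk (s :: s' :: p) (Q.stepSrc s) u := by
  obtain ⟨-, hhead, hlast, hcomp, hdistinct⟩ := hp
  simp only [List.head?_cons, Option.map_some, Option.some.injEq] at hhead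
  exact ⟨List.cons_ne_nil _ _, rfl, by rwa [List.getLast?_cons_cons],
    List.isChain_cons_cons.mpr ⟨hhead.symm, hcomp⟩, List.isChain_cons_cons.mpr ⟨hne, hdistinct⟩⟩

theorem fst_ne_of_followsFlow {R : Type} [Zero R] [Preorder R] {f : A → R} {s s' : A × Bool}
    (hs : FollowsFlow f s) (hs' : FollowsFlow f s') (hloop : Q.stepSrc s ≠ Q.stepDst s)
    (hcomp : Q.stepDst s = Q.stepSrc s') : s.1 ≠ s'.1 := by
  obtain ⟨a, b⟩ := s
  obtain ⟨a', b'⟩ := s'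
  rintro rfl
  cases b <;> cases b' <;> simp_all [FollowsFlow, stepSrc, stepDst, lt_asymm]

theorem exists_isWalk_of_reflTransGen {R : Type} [Zero R] [Preorder R] {f : A → R} {u u' : V}
    (h : Relation.ReflTransGen (Q.FlowAdj f) u u') :
    u = u' ∨ ∃ p, Q.IsWalk p u u' ∧ ∀ s ∈ p, FollowsFlow f s := by
  induction h using Relation.ReflTransGen.head_induction_on with
  | refl => exact Or.inl rfl
  | head hadj _ ih =>
    obtain ⟨s, rfl, rfl, hs⟩ := hadj
    by_cases hloop : Q.stepSrc s = Q.stepDst s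
    · rwa [hloop]
    right
    rcases ih with rfl | ⟨_ | ⟨s', p⟩, hp, hfollow⟩
    · exact ⟨[s], Q.isWalk_singleton s, by simpa using hs⟩
    · exact absurd rfl hp.1
    · have hs' := hfollow s' List.mem_cons_self
      have hcomp : Q.stepDst s = Q.stepSrc s' := by simpa using hp.2.1.symm
      refine ⟨s :: s' :: p, hp.cons (Q.fst_ne_of_followsFlow hs hs' hloop hcomp), ?_⟩
      simpa [hs] using hfollow

end FQuiver

theorem statement9_general {V A : Type} [Fintype V] [Fintype A] [DecidableEq V]
    (Q : FQuiver V A) (v v' : V) (hvv' : v ≠ v') (f : A → ℤ)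
    (hf : Q.boundary f =
      fun u => (if u = v' then (1 : ℤ) else 0) - (if u = v then 1 else 0)) :
    ∃ p : List (A × Bool), Q.IsWalk p v v' ∧
      (∀ a ∈ posArrows p, 0 < f a) ∧ ∀ a ∈ negArrows p, f a < 0 := by
  classical
  set S := univ.filter (Relation.ReflTransGen (Q.FlowAdj f) v)
  have hvS : v ∈ S := by simp [S, Relation.ReflTransGen.refl]
  have hv'S : v' ∈ S := by
    by_contra hv'
    have hnonneg := Q.sum_boundary_nonneg_of_flowAdj_closed f S fun u hu u' hadj => by
      simp only [S, mem_filter, mem_univ, true_and] at hu ⊢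
      exact hu.tail hadj
    simp [hf, sum_sub_distrib, hvS, hv'] at hnonneg
  obtain hvv | ⟨p, hp, hfollow⟩ :=
    Q.exists_isWalk_of_reflTransGen (by simpa [S] using hv'S)
  · exact absurd hvv hvv'
  exact ⟨p, hp, fun a ha => by simpa [FollowsFlow] using hfollow _ ha,
    fun a ha => by simpa [FollowsFlow] using hfollow _ ha⟩

/-- If `f` is an integral flow with `∂f = χ_{v'} − χ_v` for distinct
vertices `v, v'`, then there is a path `p` from `v` to `v'` with `f > 0` on the positive
part `p⁺` and `f < 0` on the negative part `p⁻`. -/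
theorem statement9 {V A : Type} [Fintype V] [Fintype A] [DecidableEq V] [DecidableEq A]
    (Q : FQuiver V A) (v v' : V) (hvv' : v ≠ v') (f : A → ℤ)
    (hf : Q.boundary f =
      fun u => (if u = v' then (1 : ℤ) else 0) - (if u = v then 1 else 0)) :
    ∃ p : List (A × Bool), Q.IsWalk p v v' ∧
      (∀ a ∈ posArrows p, 0 < f a) ∧ ∀ a ∈ negArrows p, f a < 0 :=
  statement9_general Q v v' hvv' f hf
end

section
/- Let 𝒬 be the McKay quiver of the cyclic action 1/r(w₁,…,w_n), with each weight w_i a unit in ℤ/rℤ. Then the kernel of the group homomorphism π×∂ : Λ¹ → ℤⁿ × Λ^{0,0} equals Λ², the subgroup of Λ¹ generated by the commutation flows χ_v^i + χ_{v−w_i}^j − χ_v^j − χ_{v−w_j}^i for v ∈ ℤ/rℤ and i, j ∈ {1,…,n}. In particular the quotient Λ¹/Λ² is torsion-free. -/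
/-!
Common framework: finite quivers, flows, boundaries, cycles, closures, the projection π,
and the solution polyhedra of the (generalised) transportation problem, following
Sardo Infirri, "Orbifold Singularities and McKay Flows".
-/

open Finset

variable {V A : Type}

/-!
Fix a type `j`. Since `w j` is a unit, translation by `w j` permutes `ZMod r` in a single cycle,
so every column `f (·, i)` of a flow in the kernel of `π × ∂`, having sum zero, is a difference
`H i - H i (· + w j)`. Subtracting `∑ i v, H i v • commFlow v i j` leaves a kernel flow supported
on type `j`; its boundary condition makes it `w j`-periodic, hence constant, hence zero. The
kernel of a map into the torsion-free group `ℤⁿ × Λ^{0,0}` is saturated, which gives the second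
claim.
-/

theorem AddMonoidHom.mem_ker_of_zsmul_mem_ker {M N : Type*} [AddCommGroup M] [AddCommGroup N]
    [Module.IsTorsionFree ℤ N] (φ : M →+ N) {k : ℤ} (hk : k ≠ 0) {x : M}
    (h : k • x ∈ φ.ker) : x ∈ φ.ker := by
  rw [AddMonoidHom.mem_ker, map_zsmul, smul_eq_zero] at h
  exact h.resolve_left hk

def piMapHom [Fintype A] {n : ℕ} (π : A → Fin n) (R : Type) [AddCommMonoid R] :
    (A → R) →+ (Fin n → R) where
  toFun := piMap π
  map_zero' := by ext; simp [piMap]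
  map_add' f g := by ext; simp [piMap, sum_add_distrib]

def FQuiver.boundaryHom [Fintype A] [DecidableEq V] (Q : FQuiver V A) (R : Type)
    [AddCommGroup R] : (A → R) →+ (V → R) where
  toFun := Q.boundary
  map_zero' := by ext; simp [FQuiver.boundary]
  map_add' f g := by ext; simp only [FQuiver.boundary, Pi.add_apply, sum_add_distrib]; abel

@[simp]
theorem coe_piMapHom [Fintype A] {n : ℕ} (π : A → Fin n) (R : Type) [AddCommMonoid R] :
    ⇑(piMapHom π R) = piMap π :=
  rfl

@[simp]
theorem FQuiver.coe_boundaryHom [Fintype A] [DecidableEq V] (Q : FQuiver V A) (R : Type)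
    [AddCommGroup R] : ⇑(Q.boundaryHom R) = Q.boundary :=
  rfl

def flowKer [Fintype A] [DecidableEq V] {n : ℕ} (Q : FQuiver V A) (π : A → Fin n) :
    AddSubgroup (A → ℤ) :=
  ((piMapHom π ℤ).prod (Q.boundaryHom ℤ)).ker

theorem mem_flowKer [Fintype A] [DecidableEq V] {n : ℕ} {Q : FQuiver V A} {π : A → Fin n}
    {f : A → ℤ} : f ∈ flowKer Q π ↔ piMap π f = 0 ∧ Q.boundary f = 0 := by
  simp [flowKer, piMapHom, FQuiver.boundaryHom]

theorem mem_flowKer_of_zsmul_mem [Fintype A] [DecidableEq V] {n : ℕ} {Q : FQuiver V A}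
    {π : A → Fin n} {k : ℤ} (hk : k ≠ 0) {f : A → ℤ} (h : k • f ∈ flowKer Q π) :
    f ∈ flowKer Q π :=
  AddMonoidHom.mem_ker_of_zsmul_mem_ker _ hk h

theorem piMap_single [Fintype A] [DecidableEq A] {n : ℕ} (π : A → Fin n) {R : Type}
    [AddCommMonoid R] (a : A) (c : R) : piMap π (Pi.single a c) = Pi.single (π a) c := by
  ext i
  simp [piMap, Pi.single_apply, eq_comm]

theorem FQuiver.boundary_single_s15 [Fintype A] [DecidableEq A] [DecidableEq V] (Q : FQuiver V A)
    {R : Type} [AddCommGroup R] (a : A) (c : R) :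
    Q.boundary (Pi.single a c) = Pi.single (Q.h a) c - Pi.single (Q.t a) c := by
  ext v
  simp [FQuiver.boundary, Pi.single_apply, eq_comm]

theorem piMap_snd_apply {X R : Type} [Fintype X] [AddCommMonoid R] {n : ℕ} (f : X × Fin n → R)
    (i : Fin n) : piMap Prod.snd f i = ∑ x, f (x, i) := by
  classical
  rw [piMap, sum_filter, Fintype.sum_prod_type]
  simp

namespace ZMod

variable {r : ℕ} [NeZero r]

theorem exists_natCast_mul_eq (u : (ZMod r)ˣ) (v : ZMod r) :
    ∃ k : ℕ, (k : ZMod r) * (u : ZMod r) = v :=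
  ⟨(v * ↑u⁻¹).val, by simp⟩

theorem sum_range_natCast {G : Type} [AddCommMonoid G] (F : ZMod r → G) :
    ∑ l ∈ range r, F l = ∑ v, F v :=
  sum_nbij' (fun l => l) val (fun _ _ => mem_univ _) (fun v _ => mem_range.2 (val_lt v))
    (fun _ hl => val_cast_of_lt (mem_range.1 hl)) (fun v _ => natCast_zmod_val v)
    (fun _ _ => rfl)

theorem exists_sub_add_eq_of_sum_eq_zero {G : Type} [AddCommGroup G] {u : ZMod r}
    (hu : IsUnit u) {F : ZMod r → G} (hF : ∑ v, F v = 0) :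
    ∃ H : ZMod r → G, ∀ v, F v = H v - H (v + u) := by
  obtain ⟨u, rfl⟩ := hu
  -- `H` is minus the partial sums of `F` along the orbit `k ↦ k * u`, which is all of `ZMod r`;
  -- they are `r`-periodic because a full period sums to `∑ v, F v = 0`.
  let S : ℕ → G := fun m => ∑ l ∈ range m, F ((l : ZMod r) * u)
  have hSr : S r = 0 := by
    change ∑ l ∈ range r, _ = _
    rw [sum_range_natCast (fun v => F (v * (u : ZMod r)))]
    exact (Equiv.sum_comp (Units.mulRight u) F).trans hF
  have hSper : Function.Periodic S r := fun m => by
    change ∑ l ∈ range (m + r), _ = S m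
    rw [add_comm, sum_range_add]
    change S r + _ = _
    simp [hSr, S]
  have hSk : ∀ k : ℕ, S ((k : ZMod r) * u * ↑u⁻¹).val = S k := fun k => by
    simp [val_natCast, hSper.map_mod_nat]
  refine ⟨fun v => -S (v * ↑u⁻¹).val, fun v => ?_⟩
  obtain ⟨k, rfl⟩ := exists_natCast_mul_eq u v
  have hsucc : (k : ZMod r) * u + u = ((k + 1 : ℕ) : ZMod r) * u := by push_cast; ring
  change _ = -S _ - -S _
  rw [hsucc, hSk, hSk, neg_sub_neg]
  exact (sum_range_succ_sub_sum (fun l : ℕ => F (l * u))).symm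

theorem eq_zero_of_periodic_of_sum_eq_zero {G : Type} [AddCommGroup G]
    [Module.IsTorsionFree ℕ G] {u : ZMod r} (hu : IsUnit u) {F : ZMod r → G}
    (hper : Function.Periodic F u) (hF : ∑ v, F v = 0) : F = 0 := by
  obtain ⟨u, rfl⟩ := hu
  have hconst : ∀ v, F v = F 0 := fun v => by
    obtain ⟨k, rfl⟩ := exists_natCast_mul_eq u v
    simpa using hper.nat_mul k 0
  rw [sum_congr rfl fun v _ => hconst v, sum_const, card_univ, ZMod.card,
    smul_eq_zero] at hF
  exact funext fun v => (hconst v).trans (hF.resolve_left (NeZero.ne r))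

end ZMod

section McKay

variable {r n : ℕ} (w : Fin n → ZMod r)

theorem commFlow_eq_single (v : ZMod r) (i j : Fin n) :
    commFlow r n w v i j = Pi.single (v, i) 1 + Pi.single (v - w i, j) 1
      - Pi.single (v, j) 1 - Pi.single (v - w j, i) 1 := by
  ext a
  simp only [commFlow, Pi.add_apply, Pi.sub_apply, Pi.single_apply]

theorem commFlow_mem_mckayLambda2 (v : ZMod r) (i j : Fin n) :
    commFlow r n w v i j ∈ mckayLambda2 r n w :=
  AddSubgroup.subset_closure ⟨v, i, j, rfl⟩

variable [NeZero r]

theorem mckayQuiver_boundary_apply {R : Type} [AddCommGroup R] (f : ZMod r × Fin n → R)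
    (v : ZMod r) :
    (mckayQuiver r n w).boundary f v = ∑ i, f (v + w i, i) - ∑ i, f (v, i) := by
  change ∑ a with a.1 - w a.2 = v, f a - ∑ a with a.1 = v, f a = _
  congr 1 <;> rw [sum_filter, Fintype.sum_prod_type, sum_comm] <;> simp [sub_eq_iff_eq_add]

theorem commFlow_mem_flowKer (v : ZMod r) (i j : Fin n) :
    commFlow r n w v i j ∈ flowKer (mckayQuiver r n w) Prod.snd := by
  rw [mem_flowKer, commFlow_eq_single, ← coe_piMapHom _ ℤ, ← FQuiver.coe_boundaryHom _ ℤ]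
  simp only [map_sub, map_add, coe_piMapHom, FQuiver.coe_boundaryHom, piMap_single,
    FQuiver.boundary_single_s15, mckayQuiver, sub_right_comm v (w i) (w j)]
  constructor <;> abel

theorem mckayLambda2_le_flowKer : mckayLambda2 r n w ≤ flowKer (mckayQuiver r n w) Prod.snd :=
  (AddSubgroup.closure_le _).2 fun _ ⟨v, i, j, hg⟩ => hg ▸ commFlow_mem_flowKer w v i j

theorem sum_smul_commFlow_apply_of_ne {j k : Fin n} (hkj : k ≠ j) (H : Fin n → ZMod r → ℤ)
    (x : ZMod r) :
    (∑ i, ∑ v, H i v • commFlow r n w v i j) (x, k) = H k x - H k (x + w j) := by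
  simp [Finset.sum_apply, commFlow, Prod.ext_iff, ite_and, hkj, mul_sub, sum_sub_distrib,
    eq_sub_iff_add_eq]

theorem eq_zero_of_mem_flowKer_of_forall_ne {j : Fin n} (hj : IsUnit (w j))
    {g : ZMod r × Fin n → ℤ} (hg : g ∈ flowKer (mckayQuiver r n w) Prod.snd)
    (hsupp : ∀ x k, k ≠ j → g (x, k) = 0) : g = 0 := by
  obtain ⟨hπ, hbd⟩ := mem_flowKer.1 hg
  have hper : Function.Periodic (fun x => g (x, j)) (w j) := fun x => by
    have hx := congrFun hbd x
    rwa [mckayQuiver_boundary_apply, Fintype.sum_eq_single j fun k hk => hsupp _ k hk,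
      Fintype.sum_eq_single j fun k hk => hsupp _ k hk, Pi.zero_apply, sub_eq_zero] at hx
  have hj0 := ZMod.eq_zero_of_periodic_of_sum_eq_zero hj hper
    (by rw [← piMap_snd_apply, hπ, Pi.zero_apply])
  ext ⟨x, k⟩
  obtain rfl | hk := eq_or_ne k j
  · exact congrFun hj0 x
  · exact hsupp x k hk

theorem mem_mckayLambda2_of_mem_flowKer {j : Fin n} (hj : IsUnit (w j))
    {f : ZMod r × Fin n → ℤ} (hf : f ∈ flowKer (mckayQuiver r n w) Prod.snd) :
    f ∈ mckayLambda2 r n w := by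
  choose H hH using fun i => ZMod.exists_sub_add_eq_of_sum_eq_zero hj
    (by rw [← piMap_snd_apply, (mem_flowKer.1 hf).1, Pi.zero_apply] : ∑ x, f (x, i) = 0)
  have hS : ∑ i, ∑ v, H i v • commFlow r n w v i j ∈ mckayLambda2 r n w :=
    sum_mem fun i _ => sum_mem fun v _ => zsmul_mem (commFlow_mem_mckayLambda2 w v i j) _
  have hfS := eq_zero_of_mem_flowKer_of_forall_ne w hj
    (sub_mem hf (mckayLambda2_le_flowKer w hS)) fun x k hk => by
      rw [Pi.sub_apply, sum_smul_commFlow_apply_of_ne w hk, hH, sub_self]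
  exact sub_eq_zero.1 hfS ▸ hS

theorem mckayLambda2_eq_flowKer (hw : ∀ i, IsUnit (w i)) :
    mckayLambda2 r n w = flowKer (mckayQuiver r n w) Prod.snd := by
  refine le_antisymm (mckayLambda2_le_flowKer w) fun f hf => ?_
  obtain _ | ⟨⟨j⟩⟩ := isEmpty_or_nonempty (Fin n)
  · exact Subsingleton.elim f 0 ▸ zero_mem _
  · exact mem_mckayLambda2_of_mem_flowKer w (hw j) hf

end McKay

/-- In the McKay quiver of `1/r (w₁, …, w_n)` (weights units in
`ℤ/rℤ`), the kernel of `π×∂ : Λ¹ → ℤⁿ × Λ^{0,0}` is exactly `Λ²`, the subgroup generated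
by the commutation flows `χ_v^i + χ_{v−w_i}^j − χ_v^j − χ_{v−w_j}^i`; in particular the
quotient `Λ¹/Λ²` is torsion-free. -/
theorem statement15 (r n : ℕ) [NeZero r] (w : Fin n → ZMod r) (hw : ∀ i, IsUnit (w i)) :
    (∀ f : ZMod r × Fin n → ℤ,
      (piMap Prod.snd f = 0 ∧ (mckayQuiver r n w).boundary f = 0) ↔
        f ∈ mckayLambda2 r n w) ∧
    ∀ (k : ℤ) (f : ZMod r × Fin n → ℤ), k ≠ 0 → k • f ∈ mckayLambda2 r n w →
      f ∈ mckayLambda2 r n w := by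
  rw [mckayLambda2_eq_flowKer w hw]
  exact ⟨fun f => mem_flowKer.symm, fun k f hk => mem_flowKer_of_zsmul_mem hk⟩
end

section
/- Let 𝒬 be the McKay quiver of the cyclic action 1/r(w₁,…,w_n), with each weight w_i a unit in ℤ/rℤ. Then π({f ∈ Λ¹ : ∂f = 0}) = Π, where Π = {x ∈ ℤⁿ : Σ_{i=1}^n x_i w_i = 0 in ℤ/rℤ}: the image under π of the integral flows with zero boundary is exactly the sublattice Π of ℤⁿ (of index r). -/
/-!
Common framework: finite quivers, flows, boundaries, cycles, closures, the projection π,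
and the solution polyhedra of the (generalised) transportation problem, following
Sardo Infirri, "Orbifold Singularities and McKay Flows".
-/

open Finset

variable {V A : Type}

lemma zmod_count {r : ℕ} [NeZero r] (m : ℕ) (hm : m ≤ r) :
    (∑ k : ZMod r, if k.val < m then (1:ℤ) else 0) = m := by
  have h1 : ∀ a ∈ univ.filter (fun k : ZMod r => k.val < m), a.val ∈ range m := by
    intro a ha; simp only [mem_filter] at ha; simpa using ha.2
  have h2 : ∀ a₁ ∈ univ.filter (fun k : ZMod r => k.val < m),
      ∀ a₂ ∈ univ.filter (fun k : ZMod r => k.val < m), a₁.val = a₂.val → a₁ = a₂ := by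
    intro a _ b _ h
    have ha := (ZMod.natCast_rightInverse (n := r) a).symm
    have hb := (ZMod.natCast_rightInverse (n := r) b).symm
    rw [ha, hb, h]
  have h3 : ∀ b ∈ range m, ∃ a, ∃ _ : a ∈ univ.filter (fun k : ZMod r => k.val < m), a.val = b := by
    intro b hb
    simp only [Finset.mem_range] at hb
    exact ⟨(b : ZMod r), by
      simpa [ZMod.val_cast_of_lt (lt_of_lt_of_le hb hm)] using hb,
      ZMod.val_cast_of_lt (lt_of_lt_of_le hb hm)⟩
  have hcard : (univ.filter (fun k : ZMod r => k.val < m)).card = m := by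
    rw [Finset.card_bij (fun k _ => ZMod.val k) h1 h2 h3, Finset.card_range]
  rw [← Finset.sum_filter, Finset.sum_const, hcard]
  simp

lemma zmod_ind_count {r : ℕ} [NeZero r] (m : ℕ) (hm : m < r) (t : ZMod r) :
    ((if (t - 1).val < m then (1:ℤ) else 0) - (if t.val < m then 1 else 0))
      = (if t = (m : ZMod r) then 1 else 0) - (if t = 0 then 1 else 0) := by
  have hvm : ((m : ZMod r)).val = m := ZMod.val_cast_of_lt hm
  rcases eq_or_ne t 0 with rfl | ht0
  · have h1 : ((0 - 1 : ZMod r)).val = r - 1 := by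
      rcases Nat.exists_eq_succ_of_ne_zero (NeZero.ne r) with ⟨k, rfl⟩
      simpa using ZMod.val_neg_one k
    rw [h1]
    have hno : ¬ (r - 1 < m) := by omega
    have h0m : ((0 : ZMod r) = (m : ZMod r)) ↔ m = 0 := by
      constructor
      · intro h; rw [← hvm, ← h, ZMod.val_zero]
      · rintro rfl; simp
    rcases Nat.eq_zero_or_pos m with rfl | hmpos
    · simp [hno]
    · simp [hno, h0m, ZMod.val_zero, hmpos, Nat.pos_iff_ne_zero.mp hmpos]
  · have hk : 0 < t.val := by
      rcases Nat.eq_zero_or_pos t.val with h | h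
      · exact absurd (by rwa [ZMod.val_eq_zero] at h) ht0
      · exact h
    have hkr : t.val < r := ZMod.val_lt t
    have ht : t = ((t.val : ℕ) : ZMod r) := (ZMod.natCast_rightInverse t).symm
    have h1 : (t - 1).val = t.val - 1 := by
      have h2 : t - 1 = ((t.val - 1 : ℕ) : ZMod r) := by
        rw [Nat.cast_sub hk, Nat.cast_one, ← ht]
      rw [h2, ZMod.val_cast_of_lt (by omega)]
    rw [h1]
    have htm : (t = (m : ZMod r)) ↔ t.val = m := by
      constructor
      · intro h; rw [h, hvm]
      · intro h; rw [ht, h]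
    rcases eq_or_ne t.val m with he | hne
    · have hm0 : 0 < m := by omega
      simp [htm, he, ht0, (show t.val - 1 < m by omega), (show ¬ (t.val < t.val) from lt_irrefl _), Nat.pos_iff_ne_zero.mp hm0]
    · have hiff : (t.val - 1 < m) ↔ (t.val < m) := by omega
      simp only [hiff, htm, hne, if_false, ht0, sub_self]

section Aux
variable {r n : ℕ} [NeZero r]

lemma sum_fiber_snd {M : Type} [AddCommMonoid M] (f : ZMod r × Fin n → M) (i : Fin n) :
    ∑ a ∈ univ.filter (fun a : ZMod r × Fin n => a.2 = i), f a = ∑ u : ZMod r, f (u, i) := by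
  rw [Finset.sum_filter, Fintype.sum_prod_type]
  simp [Finset.sum_ite_eq']

lemma sum_fiber_head {M : Type} [AddCommMonoid M] (w : Fin n → ZMod r)
    (f : ZMod r × Fin n → M) (v : ZMod r) :
    ∑ a ∈ univ.filter (fun a : ZMod r × Fin n => a.1 - w a.2 = v), f a
      = ∑ i : Fin n, f (v + w i, i) := by
  rw [Finset.sum_filter, Fintype.sum_prod_type, Finset.sum_comm]
  refine Finset.sum_congr rfl fun i _ => ?_
  have h : ∀ u : ZMod r, (u - w i = v) = (u = v + w i) := by
    intro u; simp [sub_eq_iff_eq_add, add_comm]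
  simp_rw [h]
  simp [Finset.sum_ite_eq']

lemma sum_fiber_tail {M : Type} [AddCommMonoid M]
    (f : ZMod r × Fin n → M) (v : ZMod r) :
    ∑ a ∈ univ.filter (fun a : ZMod r × Fin n => a.1 = v), f a
      = ∑ i : Fin n, f (v, i) := by
  rw [Finset.sum_filter, Fintype.sum_prod_type, Finset.sum_comm]
  refine Finset.sum_congr rfl fun i _ => ?_
  simp [Finset.sum_ite_eq']

lemma mckay_boundary (w : Fin n → ZMod r) (f : ZMod r × Fin n → ℤ) (v : ZMod r) :
    (mckayQuiver r n w).boundary f v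
      = (∑ i : Fin n, f (v + w i, i)) - ∑ i : Fin n, f (v, i) := by
  show (∑ a ∈ univ.filter (fun a : ZMod r × Fin n => a.1 - w a.2 = v), f a)
      - (∑ a ∈ univ.filter (fun a : ZMod r × Fin n => a.1 = v), f a) = _
  rw [sum_fiber_head, sum_fiber_tail]

lemma forward_dir (w : Fin n → ZMod r) (f : ZMod r × Fin n → ℤ)
    (hb : (mckayQuiver r n w).boundary f = 0) :
    ∑ i, ((piMap Prod.snd f i : ℤ) : ZMod r) * w i = 0 := by
  have h0 : ∑ v : ZMod r, ((mckayQuiver r n w).boundary f v) • v = 0 := by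
    rw [hb]; simp
  simp_rw [mckay_boundary, sub_smul, Finset.sum_smul, Finset.sum_sub_distrib] at h0
  rw [Finset.sum_comm (γ := ZMod r), Finset.sum_comm (γ := ZMod r) (f := fun v i => f (v, i) • v)] at h0
  have hre : ∀ i : Fin n, (∑ v : ZMod r, f (v + w i, i) • v)
      = ∑ v : ZMod r, f (v, i) • (v - w i) := by
    intro i
    apply Fintype.sum_equiv (Equiv.addRight (w i))
    intro v; simp
  simp_rw [hre, smul_sub, ← Finset.sum_sub_distrib] at h0
  have h1 : ∀ i : Fin n, ∑ v : ZMod r, (f (v, i) • v - f (v, i) • w i - f (v, i) • v)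
      = -(((∑ v : ZMod r, f (v, i)) : ℤ) • w i) := by
    intro i
    have e : ∀ v : ZMod r, f (v, i) • v - f (v, i) • w i - f (v, i) • v = -(f (v, i) • w i) := by
      intro v; abel
    simp_rw [e, Finset.sum_neg_distrib, ← Finset.sum_smul]
  simp_rw [h1] at h0
  have h2 : ∀ i : Fin n, ((piMap Prod.snd f i : ℤ) : ZMod r) * w i
      = ((∑ v : ZMod r, f (v, i)) : ℤ) • w i := by
    intro i
    rw [show piMap Prod.snd f i = ∑ v : ZMod r, f (v, i) from sum_fiber_snd f i]
    simp [zsmul_eq_mul]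
  simp_rw [h2]
  rw [← neg_eq_zero, ← Finset.sum_neg_distrib]
  exact h0

lemma backward_dir (w : Fin n → ZMod r) (hw : ∀ i, IsUnit (w i)) (x : Fin n → ℤ)
    (hx : ∑ i, ((x i : ℤ) : ZMod r) * w i = 0) :
    ∃ f : ZMod r × Fin n → ℤ,
      (mckayQuiver r n w).boundary f = 0 ∧ piMap Prod.snd f = x := by
  classical
  set m : Fin n → ℕ := fun i => ((x i : ZMod r)).val with hm_def
  have hm : ∀ i, ((m i : ℕ) : ZMod r) = ((x i : ℤ) : ZMod r) := fun i =>
    ZMod.natCast_rightInverse _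
  have hmlt : ∀ i, m i < r := fun i => ZMod.val_lt _
  have hdvd : ∀ i, (r : ℤ) ∣ (x i - m i) := by
    intro i
    rw [← ZMod.intCast_zmod_eq_zero_iff_dvd]
    push_cast
    rw [hm i, sub_self]
  set q : Fin n → ℤ := fun i => (x i - m i) / r with hq_def
  have hq : ∀ i, (r : ℤ) * q i = x i - m i := fun i => Int.mul_ediv_cancel' (hdvd i)
  set term : ℕ → ZMod r := fun j =>
    if h : j < n then ((x ⟨j, h⟩ : ℤ) : ZMod r) * w ⟨j, h⟩ else 0 with hterm_def
  set s : ℕ → ZMod r := fun k => ∑ j ∈ Finset.range k, term j with hs_def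
  set c : Fin n → ZMod r := fun i => (((hw i).unit⁻¹ : (ZMod r)ˣ) : ZMod r) with hc_def
  have hcw : ∀ i, c i * w i = 1 := fun i => (hw i).val_inv_mul
  refine ⟨fun a => q a.2 + (if (c a.2 * (- s (a.2 : ℕ) - a.1)).val < m a.2 then 1 else 0),
    ?_, ?_⟩
  · -- boundary = 0
    funext v
    rw [mckay_boundary, ← Finset.sum_sub_distrib]
    show (∑ i : Fin n,
      ((q i + (if (c i * (- s (i : ℕ) - (v + w i))).val < m i then (1:ℤ) else 0)) -
       (q i + (if (c i * (- s (i : ℕ) - v)).val < m i then (1:ℤ) else 0)))) = 0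
    have key : ∀ i : Fin n,
        ((q i + (if (c i * (- s (i : ℕ) - (v + w i))).val < m i then (1:ℤ) else 0)) -
         (q i + (if (c i * (- s (i : ℕ) - v)).val < m i then (1:ℤ) else 0)))
        = (if v = - s ((i : ℕ) + 1) then (1:ℤ) else 0) - (if v = - s (i : ℕ) then 1 else 0) := by
      intro i
      set t : ZMod r := c i * (- s (i : ℕ) - v) with ht_def
      have harg : c i * (- s (i : ℕ) - (v + w i)) = t - 1 := by
        rw [ht_def, ← hcw i]; ring
      rw [harg, add_sub_add_left_eq_sub, zmod_ind_count (m i) (hmlt i) t]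
      have hiff : ∀ μ : ZMod r, (t = μ) ↔ (v = - s (i : ℕ) - w i * μ) := by
        intro μ
        rw [ht_def]
        constructor
        · intro h
          have h2 : w i * (c i * (- s (i : ℕ) - v)) = w i * μ := by rw [h]
          rw [← mul_assoc, mul_comm (w i) (c i), hcw i, one_mul] at h2
          rw [← h2]; ring
        · intro h
          rw [h]; rw [show - s (i : ℕ) - (- s (i : ℕ) - w i * μ) = w i * μ by ring,
            ← mul_assoc, hcw i, one_mul]
      have e1 : (t = ((m i : ℕ) : ZMod r)) ↔ (v = - s ((i : ℕ) + 1)) := by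
        rw [hiff]
        have hs1 : s ((i : ℕ) + 1) = s (i : ℕ) + ((x i : ℤ) : ZMod r) * w i := by
          rw [hs_def]
          simp only [Finset.sum_range_succ]
          congr 1
          rw [hterm_def]
          simp only [i.isLt, dif_pos, Fin.eta]
        rw [hs1, hm i]
        constructor <;> intro h <;> rw [h] <;> ring
      have e2 : (t = 0) ↔ (v = - s (i : ℕ)) := by
        rw [hiff]
        simp
      simp_rw [e1, e2]
    simp_rw [key]
    rw [Fin.sum_univ_eq_sum_range
      (fun k => (if v = - s (k + 1) then (1:ℤ) else 0) - (if v = - s k then 1 else 0)) n,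
      Finset.sum_range_sub (fun k => if v = - s k then (1:ℤ) else 0) n]
    have hsn : s n = 0 := by
      show (∑ j ∈ Finset.range n, term j) = 0
      rw [← Fin.sum_univ_eq_sum_range (fun j => term j) n]
      rw [← hx]
      apply Finset.sum_congr rfl
      intro i _
      rw [hterm_def]
      simp [i.isLt, Fin.eta]
    have hs0 : s 0 = 0 := by show (∑ j ∈ Finset.range 0, term j) = 0; simp
    rw [hsn, hs0, sub_self]
  · -- piMap = x
    funext i
    show (∑ a ∈ univ.filter (fun a : ZMod r × Fin n => a.2 = i), _) = x i
    rw [sum_fiber_snd (fun a : ZMod r × Fin n =>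
      q a.2 + (if (c a.2 * (- s (a.2 : ℕ) - a.1)).val < m a.2 then (1:ℤ) else 0)) i]
    simp only
    rw [Finset.sum_add_distrib, Finset.sum_const]
    have hcount : (∑ u : ZMod r,
        (if (c i * (- s (i : ℕ) - u)).val < m i then (1:ℤ) else 0)) = m i := by
      calc (∑ u : ZMod r, (if (c i * (- s (i : ℕ) - u)).val < m i then (1:ℤ) else 0))
          = ∑ k : ZMod r, (if k.val < m i then (1:ℤ) else 0) := by
            apply Fintype.sum_equiv
              ((Equiv.subLeft (- s (i : ℕ))).trans (Units.mulLeft ((hw i).unit⁻¹)))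
            intro u
            rfl
        _ = m i := zmod_count (m i) (le_of_lt (hmlt i))
    rw [hcount, Finset.card_univ, ZMod.card]
    rw [nsmul_eq_mul]
    have := hq i
    push_cast
    omega

end Aux

/-- In the McKay quiver of `1/r (w₁, …, w_n)` (weights units in
`ℤ/rℤ`), the image under `π` of the integral flows with zero boundary is exactly the
sublattice `Π = {x ∈ ℤⁿ : Σ x_i w_i = 0 in ℤ/rℤ}`. -/
theorem statement16 (r n : ℕ) [NeZero r] (w : Fin n → ZMod r) (hw : ∀ i, IsUnit (w i)) :
    ∀ x : Fin n → ℤ,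
      (∃ f : ZMod r × Fin n → ℤ,
        (mckayQuiver r n w).boundary f = 0 ∧ piMap Prod.snd f = x) ↔
      ∑ i, (x i : ZMod r) * w i = 0 := by
  intro x
  constructor
  · rintro ⟨f, hb, hπ⟩
    have h := forward_dir w f hb
    rw [hπ] at h
    exact h
  · intro hx
    exact backward_dir w hw x hx
end
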